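/- For the density function δ₁(a) = (4·sinh((1/2)·arccosh((2 - 2√(1-a²) - a² + 2a⁴)/(2a⁴))) + 2√(1-a²))/π defined for 0 < a < 1, the limit as a → 0⁺ is 3/π. -/

import Mathlib

open Real Filter

/-- The inverse hyperbolic cosine on [1,∞). -/
noncomputable def arcosh (x : ℝ) : ℝ := Real.log (x + Real.sqrt (x^2 - 1))

/-- The density function of type-1 hyp-hor packings in the hyperbolic plane. -/
noncomputable def δ₁ (a : ℝ) : ℝ :=
  (4 * Real.sinh ((1/2) * _root_.arcosh ((2 - 2 * Real.sqrt (1 - a^2) - a^2 + 2 * a^4) / (2 * a^4)))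
    + 2 * Real.sqrt (1 - a^2)) / π

/-
For `0 < a < 1` put `s = √(1 - a²)`. The argument of `arcosh` in `δ₁` simplifies to
`1 + 1 / (2 (1 + s)²)`, and the half-angle formula `sinh (arcosh x / 2) = √((x - 1) / 2)`
turns the `sinh` term into `1 / (2 (1 + s))`. Hence `δ₁ a = (2 / (1 + s) + 2 s) / π`, which is
continuous at `a = 0`, where `s = 1` and the value is `3 / π`.
-/

theorem arcosh_eq_real_arcosh : _root_.arcosh = Real.arcosh := rfl

theorem Real.sinh_half_mul_arcosh {x : ℝ} (hx : 1 ≤ x) :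
    sinh (1 / 2 * Real.arcosh x) = √((x - 1) / 2) := by
  set y := 1 / 2 * Real.arcosh x
  have hy : 0 ≤ y := by have := arcosh_nonneg hx; positivity
  have hcosh : cosh (2 * y) = x := by
    rw [show 2 * y = Real.arcosh x by ring, cosh_arcosh hx]
  rw [← hcosh, cosh_two_mul, cosh_sq, show (sinh y ^ 2 + 1 + sinh y ^ 2 - 1) / 2 = sinh y ^ 2 by ring,
    sqrt_sq (sinh_nonneg_iff.mpr hy)]

theorem δ₁_arcosh_arg_eq {a : ℝ} (ha : a ≠ 0) (ha1 : a ^ 2 ≤ 1) :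
    (2 - 2 * √(1 - a ^ 2) - a ^ 2 + 2 * a ^ 4) / (2 * a ^ 4) =
      1 + 1 / (2 * (1 + √(1 - a ^ 2)) ^ 2) := by
  set s := √(1 - a ^ 2)
  -- with `a² = (1 - s)(1 + s)` the numerator is `(1 - s)² + 2 a⁴`
  have ha2 : a ^ 2 = (1 - s) * (1 + s) := by
    linear_combination (sq_sqrt (by linarith : (0 : ℝ) ≤ 1 - a ^ 2))
  have h1s : 1 - s ≠ 0 := fun h => ha (pow_eq_zero_iff two_ne_zero |>.mp (by simp [ha2, h]))
  have h1s' : 1 + s ≠ 0 := by have : 0 ≤ s := sqrt_nonneg _; positivity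
  rw [show a ^ 4 = (a ^ 2) ^ 2 by ring, ha2]
  field_simp
  ring

theorem δ₁_eq {a : ℝ} (ha : a ≠ 0) (ha1 : a ^ 2 ≤ 1) :
    δ₁ a = (2 / (1 + √(1 - a ^ 2)) + 2 * √(1 - a ^ 2)) / π := by
  have hhalf : (1 + 1 / (2 * (1 + √(1 - a ^ 2)) ^ 2) - 1) / 2 = (1 / (2 * (1 + √(1 - a ^ 2)))) ^ 2 := by
    field_simp; ring
  rw [δ₁, δ₁_arcosh_arg_eq ha ha1, arcosh_eq_real_arcosh, sinh_half_mul_arcosh (by simp; positivity),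
    hhalf, sqrt_sq (by positivity)]
  field_simp
  ring

/-- The limit of `δ₁ a` as `a → 0⁺` is `3/π`. -/
theorem delta1_tendsto_zero :
    Tendsto δ₁ (nhdsWithin 0 (Set.Ioi 0)) (nhds (3 / π)) := by
  have hcont : ContinuousAt (fun a : ℝ => (2 / (1 + √(1 - a ^ 2)) + 2 * √(1 - a ^ 2)) / π) 0 := by
    have : (1 : ℝ) + √(1 - 0 ^ 2) ≠ 0 := by norm_num
    fun_prop (disch := assumption)
  have hlim := hcont.tendsto.mono_left (nhdsWithin_le_nhds (s := Set.Ioi 0))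
  norm_num at hlim
  refine hlim.congr' ?_
  filter_upwards [Ioo_mem_nhdsGT (show (0 : ℝ) < 1 by norm_num)] with a ⟨ha0, ha1⟩
  exact (δ₁_eq ha0.ne' (by nlinarith)).symm
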